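/- If a sequence of real coefficients (c_j)_{j≥0} satisfies |c_j| < A·u^{-j} for all j ∈ ℕ₀, with constants A > 0 and u > 1, then for every γ > 0 the double series ∑_{j=1}^∞ ∑_{i=0}^∞ (|c_i| ∧ |c_{i+j}|)^{1/γ} · log((|c_i| ∨ |c_{i+j}|)/(|c_i| ∧ |c_{i+j}|)) · 1{c_i c_{i+j} ≠ 0} converges (is finite). -/
import Mathlib


set_option maxHeartbeats 1000000 in
theorem stmt_1 (c : ℕ → ℝ) (A u : ℝ) (hA : 0 < A) (hu : 1 < u)
    (hc : ∀ j : ℕ, |c j| < A * u ^ (-(j : ℝ))) (γ : ℝ) (hγ : 0 < γ) :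
    Summable (fun p : ℕ × ℕ =>
      if c p.2 ≠ 0 ∧ c (p.2 + (p.1 + 1)) ≠ 0 then
        (min |c p.2| |c (p.2 + (p.1 + 1))|) ^ (1 / γ) *
          Real.log (max |c p.2| |c (p.2 + (p.1 + 1))| /
            min |c p.2| |c (p.2 + (p.1 + 1))|)
      else 0) := by
  have hu0 : (0:ℝ) < u := lt_trans one_pos hu
  set β : ℝ := 1/(2*γ) with hβdef
  have hβ : 0 < β := by positivity
  set r : ℝ := u ^ (-β) with hrdef
  have hr0 : 0 < r := Real.rpow_pos_of_pos hu0 _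
  have hr1 : r < 1 := Real.rpow_lt_one_of_one_lt_of_neg hu (by linarith)
  have hAu : ∀ n : ℕ, (A * u ^ (-(n:ℝ))) ^ β = A ^ β * r ^ n := by
    intro n
    rw [Real.mul_rpow hA.le (Real.rpow_nonneg hu0.le _), ← Real.rpow_natCast r n, hrdef,
      ← Real.rpow_mul hu0.le, ← Real.rpow_mul hu0.le]
    ring_nf
  apply Summable.of_nonneg_of_le (f := fun p : ℕ × ℕ =>
    ((1/β) * (A^β * A^β)) * (r ^ (p.1+1) * (r^2) ^ p.2))
  · intro p
    by_cases h : c p.2 ≠ 0 ∧ c (p.2 + (p.1 + 1)) ≠ 0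
    · rw [if_pos h]
      have hm : 0 < min |c p.2| |c (p.2 + (p.1 + 1))| :=
        lt_min (abs_pos.mpr h.1) (abs_pos.mpr h.2)
      have h1 : (1:ℝ) ≤ max |c p.2| |c (p.2 + (p.1 + 1))| /
          min |c p.2| |c (p.2 + (p.1 + 1))| := (one_le_div hm).mpr min_le_max
      exact mul_nonneg (Real.rpow_nonneg hm.le _) (Real.log_nonneg h1)
    · rw [if_neg h]
  · intro p
    by_cases h : c p.2 ≠ 0 ∧ c (p.2 + (p.1 + 1)) ≠ 0
    swap
    · rw [if_neg h]; positivity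
    rw [if_pos h]
    set m := min |c p.2| |c (p.2 + (p.1 + 1))| with hmdef
    set M := max |c p.2| |c (p.2 + (p.1 + 1))| with hMdef
    have hm : 0 < m := lt_min (abs_pos.mpr h.1) (abs_pos.mpr h.2)
    have hM : 0 < M := lt_of_lt_of_le hm min_le_max
    have hdiv : 0 < M / m := div_pos hM hm
    -- logarithm bound
    have hlog : Real.log (M/m) ≤ (1/β) * (M/m) ^ β := by
      have h1 : β * Real.log (M/m) ≤ (M/m) ^ β := by
        have h2 := Real.log_le_sub_one_of_pos (Real.rpow_pos_of_pos hdiv β)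
        rw [Real.log_rpow hdiv] at h2
        linarith
      calc Real.log (M/m) = (1/β) * (β * Real.log (M/m)) := by field_simp
        _ ≤ (1/β) * (M/m) ^ β := by
            exact mul_le_mul_of_nonneg_left h1 (by positivity)
    -- coefficient bounds
    have hmb : m ^ β ≤ A ^ β * r ^ (p.2 + (p.1+1)) := by
      rw [← hAu]
      exact Real.rpow_le_rpow hm.le (le_trans (min_le_right _ _)
        (hc (p.2 + (p.1+1))).le) hβ.le
    have hMb : M ^ β ≤ A ^ β * r ^ p.2 := by
      rw [← hAu]
      refine Real.rpow_le_rpow hM.le (max_le (hc p.2).le ?_) hβ.le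
      refine le_trans (hc (p.2 + (p.1+1))).le ?_
      have : u ^ (-((p.2 + (p.1+1) : ℕ) : ℝ)) ≤ u ^ (-(p.2:ℝ)) := by
        apply Real.rpow_le_rpow_left_iff hu |>.mpr
        push_cast
        linarith [Nat.cast_nonneg (α := ℝ) p.1]
      nlinarith [Real.rpow_pos_of_pos hu0 (-((p.2 + (p.1+1) : ℕ) : ℝ))]
    have hsplit : m ^ (1/γ) = m ^ β * m ^ β := by
      rw [← Real.rpow_add hm]
      congr 1
      rw [hβdef]; field_simp; ring
    have hmβ : (0:ℝ) < m ^ β := Real.rpow_pos_of_pos hm β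
    have hMβ : (0:ℝ) < M ^ β := Real.rpow_pos_of_pos hM β
    calc m ^ (1/γ) * Real.log (M/m)
        ≤ m ^ (1/γ) * ((1/β) * (M/m) ^ β) :=
          mul_le_mul_of_nonneg_left hlog (Real.rpow_nonneg hm.le _)
      _ = (1/β) * (m ^ β * M ^ β) := by
          rw [hsplit, Real.div_rpow hM.le hm.le]
          field_simp
      _ ≤ (1/β) * ((A ^ β * r ^ (p.2 + (p.1+1))) * (A ^ β * r ^ p.2)) := by
          apply mul_le_mul_of_nonneg_left _ (by positivity)
          exact mul_le_mul hmb hMb hMβ.le (by positivity)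
      _ = ((1/β) * (A^β * A^β)) * (r ^ (p.1+1) * (r^2) ^ p.2) := by ring
  · have hs1 : Summable (fun j : ℕ => r ^ (j+1)) := by
      simpa [pow_succ] using (summable_geometric_of_lt_one hr0.le hr1).mul_right r
    have hs2 : Summable (fun i : ℕ => (r^2) ^ i) :=
      summable_geometric_of_lt_one (by positivity) (by nlinarith)
    exact (hs1.mul_of_nonneg hs2 (fun j => by positivity) (fun i => by positivity)).mul_left _
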